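/- Let ψ : ℕ → [0,1/4], let m < n be positive integers, and let I ⊆ [0,1] be any interval. There is an absolute constant C such that σ²[ λ(E_m^Q ∩ E_n^Q ∩ I) ] ≤ C p_m p_n ψ(m) ψ(n), where σ² denotes variance over the random choice of P. -/

import Mathlib

/-!
The variance is at most the second moment. Covering `E_m^Q ∩ E_n^Q` by the overlaps
`I_a ∩ J_b` of the intervals `I_a` around `a/m` and `J_b` around `b/n` gives
`X = λ(E_m^Q ∩ E_n^Q ∩ I) ≤ ∑_{a ≤ m, b ≤ n} 1[a ∈ P_m, b ∈ P_n] λ(I_a ∩ J_b)`, and the right side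
is at most `S = ∑_{a,b} λ(I_a ∩ J_b)`. Hence `E[X²] ≤ S · ∑_{a,b} P(a ∈ P_m, b ∈ P_n) λ(I_a ∩ J_b)
= p_m p_n S²`, by independence since `m ≠ n`. Since `ψ ≤ 1/4`, the intervals with a fixed
denominator are pairwise disjoint, so `S ≤ 2ψ(m)` and `S ≤ 2ψ(n)`.
-/

open MeasureTheory ProbabilityTheory Filter Set

noncomputable section

/-- The approximation set `⋃_{a ∈ A} ((a-ψ(n))/n, (a+ψ(n))/n)`. -/
def approxSet (A : Set ℕ) (ψ : ℕ → ℝ) (n : ℕ) : Set ℝ :=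
  ⋃ a ∈ A, Set.Ioo (((a : ℝ) - ψ n) / n) (((a : ℝ) + ψ n) / n)

/-- The set of partially reduced numerators: `a ∈ {1,…,n}` with `gcd(a,n) ≤ (log n)^{ε/2}`. -/
def Sred (ε : ℝ) (n : ℕ) : Set ℕ :=
  {a | 1 ≤ a ∧ a ≤ n ∧ (Nat.gcd a n : ℝ) ≤ Real.log n ^ (ε / 2)}

/-- The random approximation set `E_n^Q`, with numerators in `Q_n = P_n ∩ S_n`. -/
def EQset (ε : ℝ) (P : ℕ → Set ℕ) (ψ : ℕ → ℝ) (n : ℕ) : Set ℝ :=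
  approxSet (P n ∩ Sred ε n) ψ n

def approxInterval (r : ℝ) (n a : ℕ) : Set ℝ := Ioo (((a : ℝ) - r) / n) (((a : ℝ) + r) / n)

lemma volume_approxInterval (r : ℝ) (n a : ℕ) :
    volume (approxInterval r n a) = ENNReal.ofReal (2 * r / n) := by
  rw [approxInterval, Real.volume_Ioo]
  congr 1
  ring

lemma pairwise_disjoint_approxInterval {r : ℝ} (hr : r ≤ 1 / 2) {n : ℕ} (hn : 0 < n) :
    Pairwise (Function.onFun Disjoint (approxInterval r n)) := by
  intro a b hab
  rw [Function.onFun, Set.disjoint_left]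
  rintro x ⟨hax, hxa⟩ ⟨hbx, hxb⟩
  have hn' : (0 : ℝ) < n := by exact_mod_cast hn
  rw [div_lt_iff₀ hn'] at hax hbx
  rw [lt_div_iff₀ hn'] at hxa hxb
  have hab' : (a : ℝ) < b + 1 := by linarith
  have hba' : (b : ℝ) < a + 1 := by linarith
  norm_cast at hab' hba'
  omega

lemma sum_measureReal_inter_approxInterval_le {J : Set ℝ} (hJ : volume J ≠ ⊤) {r : ℝ}
    (hr : r ≤ 1 / 2) {n : ℕ} (hn : 0 < n) (t : Finset ℕ) :
    ∑ b ∈ t, volume.real (approxInterval r n b ∩ J) ≤ volume.real J := by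
  have : IsFiniteMeasure (volume.restrict J) := isFiniteMeasure_restrict.2 hJ
  calc ∑ b ∈ t, volume.real (approxInterval r n b ∩ J)
      = ∑ b ∈ t, (volume.restrict J).real (approxInterval r n b) :=
        Finset.sum_congr rfl fun b _ => (measureReal_restrict_apply measurableSet_Ioo).symm
    _ ≤ (volume.restrict J).real univ := sum_measureReal_le_measureReal_univ
        (fun b _ => measurableSet_Ioo) fun a _ b _ hab => pairwise_disjoint_approxInterval hr hn hab
    _ = volume.real J := by rw [measureReal_restrict_apply_univ]

lemma sum_sum_measureReal_inter_approxInterval_le {r r' : ℝ} (hr : 0 ≤ r) (hr' : r' ≤ 1 / 2)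
    {m n : ℕ} (hn : 0 < n) (t : Finset ℕ) :
    ∑ a ∈ Finset.Icc 1 m, ∑ b ∈ t, volume.real (approxInterval r m a ∩ approxInterval r' n b)
      ≤ 2 * r := by
  calc _ ≤ ∑ a ∈ Finset.Icc 1 m, volume.real (approxInterval r m a) := by
        refine Finset.sum_le_sum fun a _ => ?_
        simp_rw [inter_comm (approxInterval r m a)]
        exact sum_measureReal_inter_approxInterval_le (by simp [volume_approxInterval]) hr' hn t
    _ = m * (2 * r / m) := by
        simp only [measureReal_def, volume_approxInterval,
          ENNReal.toReal_ofReal (by positivity : 0 ≤ 2 * r / m), Finset.sum_const, Nat.card_Icc,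
          nsmul_eq_mul]
        norm_num
    _ ≤ 2 * r := by
        rcases m.eq_zero_or_pos with rfl | hm
        · simpa using hr
        · exact (mul_div_cancel₀ _ (by positivity)).le

lemma measureReal_approxSet_inter_approxSet_inter_le {A B : Set ℕ} {s t : Finset ℕ}
    (hA : A ⊆ s) (hB : B ⊆ t) (ψ : ℕ → ℝ) (m n : ℕ) (J : Set ℝ) :
    volume.real (approxSet A ψ m ∩ approxSet B ψ n ∩ J) ≤ ∑ q ∈ s ×ˢ t,
      (A ×ˢ B).indicator
        (fun q => volume.real (approxInterval (ψ m) m q.1 ∩ approxInterval (ψ n) n q.2)) q := by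
  classical
  set u := (s ×ˢ t).filter (· ∈ A ×ˢ B)
  have hcover : approxSet A ψ m ∩ approxSet B ψ n ∩ J
      ⊆ ⋃ q ∈ u, approxInterval (ψ m) m q.1 ∩ approxInterval (ψ n) n q.2 := by
    rintro x ⟨⟨hxA, hxB⟩, -⟩
    obtain ⟨a, ha, hxa⟩ := mem_iUnion₂.1 hxA
    obtain ⟨b, hb, hxb⟩ := mem_iUnion₂.1 hxB
    exact mem_iUnion₂.2
      ⟨(a, b), Finset.mem_filter.2 ⟨Finset.mem_product.2 ⟨hA ha, hB hb⟩, ha, hb⟩, hxa, hxb⟩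
  have hfin : volume (⋃ q ∈ u, approxInterval (ψ m) m q.1 ∩ approxInterval (ψ n) n q.2) ≠ ⊤ :=
    (measure_biUnion_lt_top u.finite_toSet fun q _ =>
      (measure_mono inter_subset_left).trans_lt (by simp [volume_approxInterval])).ne
  calc _ ≤ _ := measureReal_mono hcover hfin
    _ ≤ _ := measureReal_biUnion_finset_le _ _
    _ = _ := by simp only [u, Finset.sum_filter, indicator_apply]

lemma measurable_comp_inter_of_finite {α β Ω : Type*} [MeasurableSpace Ω] [MeasurableSpace β]
    {s : Set α} (hs : s.Finite) {Q : Ω → Set α} (hQ : ∀ a ∈ s, MeasurableSet {ω | a ∈ Q ω})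
    (F : Set α → β) : Measurable fun ω => F (s ∩ Q ω) := by
  have := hs.to_subtype
  have hφ : Measurable fun ω (a : s) => (a : α) ∈ Q ω :=
    measurable_pi_lambda _ fun a => measurableSet_setOfPred.1 (hQ a a.2)
  have hF : (fun ω => F (s ∩ Q ω))
      = (fun u : s → Prop => F (Subtype.val '' {a | u a})) ∘ fun ω (a : s) => (a : α) ∈ Q ω := by
    funext ω
    simp only [Function.comp_apply, ← Subtype.image_preimage_coe]
    rfl
  rw [hF]
  exact Measurable.of_discrete.comp hφ

lemma ProbabilityTheory.iIndepSet.measure_inter_eq_mul {ι Ω : Type*} [MeasurableSpace Ω]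
    {μ : Measure Ω} {f : ι → Set Ω} (h : iIndepSet f μ) {i j : ι} (hij : i ≠ j) :
    μ (f i ∩ f j) = μ (f i) * μ (f j) := by
  classical
  simpa [Finset.set_biInter_insert, Finset.prod_insert, hij] using h.meas_biInter {i, j}

lemma variance_le_of_le_sum_indicator {Ω ι : Type*} [MeasurableSpace Ω] {μ : Measure Ω}
    [IsProbabilityMeasure μ] {X : Ω → ℝ} (hX : AEStronglyMeasurable X μ) (hX0 : 0 ≤ X)
    (T : Finset ι) {E : ι → Set Ω} (hE : ∀ i, MeasurableSet (E i)) {c : ι → ℝ} (hc : 0 ≤ c)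
    (hXle : ∀ ω, X ω ≤ ∑ i ∈ T, (E i).indicator (fun _ => c i) ω) :
    variance X μ ≤ (∑ i ∈ T, μ.real (E i) * c i) * ∑ i ∈ T, c i := by
  set g : Ω → ℝ := fun ω => ∑ i ∈ T, (E i).indicator (fun _ => c i) ω
  have hg_le : ∀ ω, g ω ≤ ∑ i ∈ T, c i := fun ω =>
    Finset.sum_le_sum fun i _ => indicator_apply_le' (fun _ => le_rfl) fun _ => hc i
  have hg_int : Integrable g μ :=
    integrable_finsetSum _ fun i _ => (integrable_const _).indicator (hE i)
  have hsq : X ^ 2 ≤ fun ω => g ω * ∑ i ∈ T, c i := fun ω => by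
    rw [Pi.pow_apply, sq]
    exact mul_le_mul (hXle ω) ((hXle ω).trans (hg_le ω)) (hX0 ω) ((hX0 ω).trans (hXle ω))
  calc variance X μ ≤ μ[X ^ 2] := variance_le_expectation_sq hX
    _ ≤ μ[fun ω => g ω * ∑ i ∈ T, c i] :=
        integral_mono_of_nonneg (f := X ^ 2) (ae_of_all _ fun ω => sq_nonneg (X ω))
          (hg_int.mul_const _) (ae_of_all _ hsq)
    _ = (∑ i ∈ T, μ.real (E i) * c i) * ∑ i ∈ T, c i := by
        rw [integral_mul_const,
          integral_finsetSum _ fun i _ => (integrable_const _).indicator (hE i)]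
        simp only [integral_indicator_const _ (hE _), smul_eq_mul]

lemma Sred_subset_Icc (ε : ℝ) (n : ℕ) : Sred ε n ⊆ Icc 1 n := fun _ ha => ⟨ha.1, ha.2.1⟩

lemma measurable_measureReal_EQset_inter {Ω : Type*} [MeasurableSpace Ω] {P : Ω → ℕ → Set ℕ}
    (hP : ∀ n a : ℕ, MeasurableSet {ω | a ∈ P ω n}) (ε : ℝ) (ψ : ℕ → ℝ) {m n : ℕ} (hmn : m ≤ n)
    (J : Set ℝ) :
    Measurable fun ω => volume.real (EQset ε (P ω) ψ m ∩ EQset ε (P ω) ψ n ∩ J) := by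
  have hsection : ∀ ω k, k ≤ n →
      {a | (k, a) ∈ Iic n ×ˢ Iic n ∩ {q | q.2 ∈ P ω q.1}} ∩ Sred ε k = P ω k ∩ Sred ε k := by
    intro ω k hk
    ext a
    simp only [mem_inter_iff, mem_ofPred_eq, mem_prod, mem_Iic]
    constructor
    · rintro ⟨⟨-, h⟩, hS⟩; exact ⟨h, hS⟩
    · rintro ⟨h, hS⟩; exact ⟨⟨⟨hk, (Sred_subset_Icc ε k hS).2.trans hk⟩, h⟩, hS⟩
  have h := measurable_comp_inter_of_finite ((finite_Iic n).prod (finite_Iic n))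
    (Q := fun ω => {q : ℕ × ℕ | q.2 ∈ P ω q.1}) (fun q _ => hP q.1 q.2) fun R =>
      volume.real (approxSet ({a | (m, a) ∈ R} ∩ Sred ε m) ψ m
        ∩ approxSet ({b | (n, b) ∈ R} ∩ Sred ε n) ψ n ∩ J)
  simp only [hsection _ m hmn, hsection _ n le_rfl] at h
  exact h

theorem stmt11_general
    {Ω : Type*} [MeasurableSpace Ω] (μ : Measure Ω) [IsProbabilityMeasure μ]
    (ε : ℝ)
    (p : ℕ → ℝ) (hp : ∀ n, p n ∈ Set.Icc (0 : ℝ) 1)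
    (P : Ω → ℕ → Set ℕ)
    (hPmeas : ∀ n a : ℕ, MeasurableSet {ω | a ∈ P ω n})
    (hPprob : ∀ n a : ℕ, 1 ≤ a → a ≤ n → μ {ω | a ∈ P ω n} = ENNReal.ofReal (p n))
    (hPindep : iIndepSet (fun q : ℕ × ℕ => {ω | q.2 ∈ P ω q.1}) μ) :
    ∃ C > (0 : ℝ), ∀ ψ : ℕ → ℝ, (∀ k, ψ k ∈ Set.Icc (0 : ℝ) (1 / 4)) →
      ∀ m n : ℕ, 0 < m → m < n →
      ∀ I : Set ℝ, I.OrdConnected → I ⊆ Set.Icc (0 : ℝ) 1 →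
        variance (fun ω => (volume (EQset ε (P ω) ψ m ∩ EQset ε (P ω) ψ n ∩ I)).toReal) μ
          ≤ C * (p m * p n * ψ m * ψ n) := by
  refine ⟨4, by norm_num, fun ψ hψ m n hm hmn I _ _ => ?_⟩
  set s := Finset.Icc 1 m
  set t := Finset.Icc 1 n
  set c : ℕ × ℕ → ℝ := fun q =>
    volume.real (approxInterval (ψ m) m q.1 ∩ approxInterval (ψ n) n q.2)
  set E : ℕ × ℕ → Set Ω := fun q => {ω | q.1 ∈ P ω m} ∩ {ω | q.2 ∈ P ω n}
  have hXle : ∀ ω, volume.real (EQset ε (P ω) ψ m ∩ EQset ε (P ω) ψ n ∩ I)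
      ≤ ∑ q ∈ s ×ˢ t, (E q).indicator (fun _ => c q) ω := fun ω =>
    (measureReal_approxSet_inter_approxSet_inter_le
      (inter_subset_right.trans (by simpa [s] using Sred_subset_Icc ε m))
      (inter_subset_right.trans (by simpa [t] using Sred_subset_Icc ε n)) ψ m n I).trans
    (Finset.sum_le_sum fun q _ => indicator_le_indicator_of_subset
      (prod_mono inter_subset_left inter_subset_left) (fun _ => measureReal_nonneg) q)
  have hprob : ∀ q ∈ s ×ˢ t, μ.real (E q) = p m * p n := by
    intro q hq
    obtain ⟨ha, hb⟩ := Finset.mem_Icc.1 (Finset.mem_product.1 hq).1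
    obtain ⟨hb1, hb2⟩ := Finset.mem_Icc.1 (Finset.mem_product.1 hq).2
    have hne : ((m, q.1) : ℕ × ℕ) ≠ (n, q.2) := fun h => hmn.ne (congrArg Prod.fst h)
    rw [measureReal_def, hPindep.measure_inter_eq_mul hne, hPprob m q.1 ha hb,
      hPprob n q.2 hb1 hb2, ENNReal.toReal_mul, ENNReal.toReal_ofReal (hp m).1,
      ENNReal.toReal_ofReal (hp n).1]
  have hSm : ∑ q ∈ s ×ˢ t, c q ≤ 2 * ψ m := by
    rw [Finset.sum_product]
    exact sum_sum_measureReal_inter_approxInterval_le (hψ m).1 (by linarith [(hψ n).2])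
      (hm.trans hmn) t
  have hSn : ∑ q ∈ s ×ˢ t, c q ≤ 2 * ψ n := by
    rw [Finset.sum_product_right]
    simp_rw [c, inter_comm (approxInterval (ψ m) m _)]
    exact sum_sum_measureReal_inter_approxInterval_le (hψ n).1 (by linarith [(hψ m).2]) hm s
  calc _ ≤ (∑ q ∈ s ×ˢ t, μ.real (E q) * c q) * ∑ q ∈ s ×ˢ t, c q :=
        variance_le_of_le_sum_indicator
          (measurable_measureReal_EQset_inter hPmeas ε ψ hmn.le I).aestronglyMeasurable
          (fun _ => measureReal_nonneg) (s ×ˢ t) (fun q => (hPmeas m q.1).inter (hPmeas n q.2))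
          (c := c) (fun _ => measureReal_nonneg) hXle
    _ = p m * p n * (∑ q ∈ s ×ˢ t, c q) * ∑ q ∈ s ×ˢ t, c q := by
        rw [Finset.sum_congr rfl fun q hq => by rw [hprob q hq], ← Finset.mul_sum]
    _ ≤ p m * p n * (2 * ψ m) * (2 * ψ n) := by
        have hpp := mul_nonneg (hp m).1 (hp n).1
        have hS0 : 0 ≤ ∑ q ∈ s ×ˢ t, c q := Finset.sum_nonneg fun q _ => measureReal_nonneg
        exact mul_le_mul (mul_le_mul_of_nonneg_left hSm hpp) hSn hS0
          (mul_nonneg hpp (by linarith [(hψ m).1]))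
    _ = 4 * (p m * p n * ψ m * ψ n) := by ring

/-- For `m < n` and any interval `I ⊆ [0,1]`,
`σ²[λ(E_m^Q ∩ E_n^Q ∩ I)] ≤ C pₘ pₙ ψ(m) ψ(n)` over the random choice of `P`. -/
theorem stmt11
    {Ω : Type*} [MeasurableSpace Ω] (μ : Measure Ω) [IsProbabilityMeasure μ]
    (ε : ℝ) (hε : ε ∈ Set.Ioo (0 : ℝ) 1)
    (p : ℕ → ℝ) (hp : ∀ n, p n ∈ Set.Icc (0 : ℝ) 1)
    (P : Ω → ℕ → Set ℕ)
    (hPsub : ∀ ω n, P ω n ⊆ Set.Icc 1 n)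
    (hPmeas : ∀ n a : ℕ, MeasurableSet {ω | a ∈ P ω n})
    (hPprob : ∀ n a : ℕ, 1 ≤ a → a ≤ n → μ {ω | a ∈ P ω n} = ENNReal.ofReal (p n))
    (hPindep : iIndepSet (fun q : ℕ × ℕ => {ω | q.2 ∈ P ω q.1}) μ) :
    ∃ C > (0 : ℝ), ∀ ψ : ℕ → ℝ, (∀ k, ψ k ∈ Set.Icc (0 : ℝ) (1 / 4)) →
      ∀ m n : ℕ, 0 < m → m < n →
      ∀ I : Set ℝ, I.OrdConnected → I ⊆ Set.Icc (0 : ℝ) 1 →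
        variance (fun ω => (volume (EQset ε (P ω) ψ m ∩ EQset ε (P ω) ψ n ∩ I)).toReal) μ
          ≤ C * (p m * p n * ψ m * ψ n) :=
  stmt11_general μ ε p hp P hPmeas hPprob hPindep
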